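/- Fix K > 0 and α ∈ (1/2, 1). For all 0 < s < t and y > 0 one has |q*(t−s, y) − q*(t, y)| ≤ ( Γ(α − 1/2)/(π Γ(α)) ) √(K y) ( √t − √(t−s) ). -/

import Mathlib

/-!
As a function of time, `q_BS(·, y)` has derivative `K φ(d₋)/(2√t) = y φ(d₊)/(2√t)`, with
`d₊ = (2 log(y/K) + t)/(2√t)` and `d₋ = d₊ - √t`. The product of the two expressions for the
numerator is `K y φ(d₋) φ(d₊) ≤ K y φ(0)²`, so the derivative is at most `√(K y) φ(0)/(2√t)` and
`|q_BS(a, y) - q_BS(b, y)| ≤ √(K y) φ(0) (√b - √a)`. Inside the integral defining `q*` this is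
`√(K y) φ(0) (√t - √(t - s)) √u`; bounding `√u ≤ u⁻¹` on `(0, 1)` leaves the Beta integral
`B(α - 1/2, 1 - α) = Γ(α - 1/2) Γ(1 - α)/√π`, and `φ(0) = 1/√(2π) ≤ 1/√π`.
-/

open MeasureTheory Set

/-- Standard normal cumulative distribution function. -/
noncomputable def normCdf (z : ℝ) : ℝ :=
  (Real.sqrt (2 * Real.pi))⁻¹ * ∫ u in Set.Iic z, Real.exp (-u ^ 2 / 2)

/-- The Black–Scholes call price function with strike `K`. -/
noncomputable def qBS (K t y : ℝ) : ℝ :=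
  y * normCdf ((2 * Real.log (y / K) + t) / (2 * Real.sqrt t))
    - K * normCdf ((2 * Real.log (y / K) - t) / (2 * Real.sqrt t))

/-- The time-changed Black–Scholes price
`q*(t,y) = (Γ(α)Γ(1−α))⁻¹ ∫₀¹ s^{α−1}(1−s)^{−α} q_BS(ts,y) ds` for `t > 0`,
with `q*(0,y) = (y−K)₊`. -/
noncomputable def qStar (K α t y : ℝ) : ℝ :=
  if t = 0 then max (y - K) 0
  else (Real.Gamma α * Real.Gamma (1 - α))⁻¹ *
    ∫ s in Set.Ioo (0 : ℝ) 1, s ^ (α - 1) * (1 - s) ^ (-α) * qBS K (t * s) y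

open Real

noncomputable def normPdf (z : ℝ) : ℝ := (√(2 * π))⁻¹ * exp (-z ^ 2 / 2)

lemma exp_neg_sq_div_two_eq (u : ℝ) : exp (-u ^ 2 / 2) = exp (-(1 / 2) * u ^ 2) := by
  ring_nf

lemma integrable_exp_neg_sq_div_two : Integrable fun u : ℝ => exp (-u ^ 2 / 2) := by
  simpa only [exp_neg_sq_div_two_eq] using integrable_exp_neg_mul_sq (b := 1 / 2) (by norm_num)

lemma integral_exp_neg_sq_div_two : ∫ u : ℝ, exp (-u ^ 2 / 2) = √(2 * π) := by
  simp only [exp_neg_sq_div_two_eq, integral_gaussian]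
  congr 1
  ring

lemma normCdf_nonneg (z : ℝ) : 0 ≤ normCdf z :=
  mul_nonneg (by positivity) (setIntegral_nonneg measurableSet_Iic fun u _ => (exp_pos _).le)

lemma normCdf_le_one (z : ℝ) : normCdf z ≤ 1 := by
  have hle : ∫ u in Iic z, exp (-u ^ 2 / 2) ≤ √(2 * π) :=
    integral_exp_neg_sq_div_two ▸ setIntegral_le_integral integrable_exp_neg_sq_div_two
      (.of_forall fun u => (exp_pos _).le)
  have hpos : 0 < √(2 * π) := by positivity
  calc normCdf z ≤ (√(2 * π))⁻¹ * √(2 * π) := by unfold normCdf; gcongr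
    _ = 1 := inv_mul_cancel₀ hpos.ne'

lemma hasDerivAt_normCdf (z : ℝ) : HasDerivAt normCdf (normPdf z) z := by
  have hcont : Continuous fun u : ℝ => exp (-u ^ 2 / 2) := by fun_prop
  have hsplit : ∀ w, normCdf w = (√(2 * π))⁻¹ *
      ((∫ u in Iic 0, exp (-u ^ 2 / 2)) + ∫ u in (0 : ℝ)..w, exp (-u ^ 2 / 2)) := fun w => by
    rw [← intervalIntegral.integral_Iic_sub_Iic integrable_exp_neg_sq_div_two.integrableOn
      integrable_exp_neg_sq_div_two.integrableOn, add_sub_cancel, normCdf]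
  have hftc : HasDerivAt (fun w => ∫ u in (0 : ℝ)..w, exp (-u ^ 2 / 2)) (exp (-z ^ 2 / 2)) z :=
    intervalIntegral.integral_hasDerivAt_right (hcont.intervalIntegrable _ _)
      (hcont.stronglyMeasurableAtFilter _ _) hcont.continuousAt
  rw [funext hsplit]
  exact (hftc.const_add _).const_mul _

lemma continuous_normCdf : Continuous normCdf :=
  continuous_iff_continuousAt.2 fun z => (hasDerivAt_normCdf z).continuousAt

lemma normPdf_nonneg (z : ℝ) : 0 ≤ normPdf z := by unfold normPdf; positivity

lemma normPdf_le_normPdf_zero (z : ℝ) : normPdf z ≤ normPdf 0 := by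
  unfold normPdf
  gcongr _ * exp ?_
  nlinarith [sq_nonneg z]

lemma normPdf_mul_normPdf_le (a b : ℝ) : normPdf a * normPdf b ≤ normPdf 0 ^ 2 :=
  sq (normPdf 0) ▸ mul_le_mul (normPdf_le_normPdf_zero a) (normPdf_le_normPdf_zero b)
    (normPdf_nonneg b) (normPdf_nonneg 0)

lemma normPdf_zero_le_inv_sqrt_pi : normPdf 0 ≤ (√π)⁻¹ := by
  rw [normPdf, sq, mul_zero, neg_zero, zero_div, exp_zero, mul_one]
  gcongr
  linarith [pi_pos]

lemma qBS_eq (K t y : ℝ) :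
    qBS K t y = y * normCdf ((2 * log (y / K) + t) / (2 * √t))
      - K * normCdf ((2 * log (y / K) + t) / (2 * √t) - √t) := by
  rcases le_or_gt t 0 with ht | ht
  · -- `√t = 0`, so both arguments of `normCdf` are the junk value `x / 0 = 0`
    simp [qBS, sqrt_eq_zero'.2 ht]
  · have : (2 * log (y / K) - t) / (2 * √t) = (2 * log (y / K) + t) / (2 * √t) - √t := by
      field_simp
      rw [sq_sqrt ht.le]
      ring
    rw [qBS, this]

lemma mul_normPdf_sub_sqrt {K y : ℝ} (hK : 0 < K) (hy : 0 < y) {t : ℝ} (ht : 0 < t) :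
    K * normPdf ((2 * log (y / K) + t) / (2 * √t) - √t)
      = y * normPdf ((2 * log (y / K) + t) / (2 * √t)) := by
  set d := (2 * log (y / K) + t) / (2 * √t)
  have hsq : -(d - √t) ^ 2 / 2 = -d ^ 2 / 2 + log (y / K) := by
    have hs : 0 < √t := sqrt_pos.2 ht
    simp only [d]
    field_simp
    rw [sq_sqrt ht.le]
    ring
  rw [normPdf, normPdf, hsq, exp_add, exp_log (by positivity)]
  field_simp

lemma hasDerivAt_qBS {K y : ℝ} (hK : 0 < K) (hy : 0 < y) {t : ℝ} (ht : 0 < t) :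
    HasDerivAt (fun t => qBS K t y)
      (K * normPdf ((2 * log (y / K) + t) / (2 * √t) - √t) / (2 * √t)) t := by
  have hd : HasDerivAt (fun t => (2 * log (y / K) + t) / (2 * √t))
      (deriv (fun t => (2 * log (y / K) + t) / (2 * √t)) t) t :=
    ((differentiableAt_id.const_add _).div
      ((hasDerivAt_sqrt ht.ne').differentiableAt.const_mul _) (by positivity)).hasDerivAt
  have hΦd := ((hasDerivAt_normCdf _).comp t hd).const_mul y
  have hΦd' := ((hasDerivAt_normCdf _).comp t (hd.sub (hasDerivAt_sqrt ht.ne'))).const_mul K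
  rw [funext fun t => qBS_eq K t y]
  refine (hΦd.sub hΦd').congr_deriv ?_
  simp only [Pi.sub_apply]
  -- `y φ(d₊) = K φ(d₋)` cancels every term carrying the derivative of `d₊`
  rw [← mul_assoc y, ← mul_normPdf_sub_sqrt hK hy ht]
  field_simp
  ring

lemma mul_normPdf_sub_sqrt_le {K y : ℝ} (hK : 0 < K) (hy : 0 < y) {t : ℝ} (ht : 0 < t) :
    K * normPdf ((2 * log (y / K) + t) / (2 * √t) - √t) ≤ √(K * y) * normPdf 0 := by
  set d := (2 * log (y / K) + t) / (2 * √t)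
  have hsq : (K * normPdf (d - √t)) ^ 2 ≤ (√(K * y) * normPdf 0) ^ 2 := by
    calc (K * normPdf (d - √t)) ^ 2 = K * y * (normPdf (d - √t) * normPdf d) := by
          rw [sq, ← mul_assoc, mul_normPdf_sub_sqrt hK hy ht]
          ring
      _ ≤ K * y * normPdf 0 ^ 2 := by gcongr; exact normPdf_mul_normPdf_le _ _
      _ = (√(K * y) * normPdf 0) ^ 2 := by rw [mul_pow, sq_sqrt (by positivity)]
  exact (sq_le_sq₀ (mul_nonneg hK.le (normPdf_nonneg _))
    (mul_nonneg (sqrt_nonneg _) (normPdf_nonneg 0))).1 hsq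

lemma abs_qBS_sub_le {K y : ℝ} (hK : 0 < K) (hy : 0 < y) {a b : ℝ} (ha : 0 < a) (hab : a ≤ b) :
    |qBS K a y - qBS K b y| ≤ √(K * y) * normPdf 0 * (√b - √a) := by
  have hderiv : ∀ x ∈ Ico a b, HasDerivAt (fun t => qBS K t y - qBS K a y)
      (K * normPdf ((2 * log (y / K) + x) / (2 * √x) - √x) / (2 * √x)) x :=
    fun x hx => (hasDerivAt_qBS hK hy (ha.trans_le hx.1)).sub_const _
  have hfence := image_norm_le_of_norm_deriv_right_le_deriv_boundary'
    (f := fun t => qBS K t y - qBS K a y) (B := fun t => √(K * y) * normPdf 0 * (√t - √a))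
    (fun x hx => ((hasDerivAt_qBS hK hy (ha.trans_le hx.1)).continuousAt.sub
      continuousAt_const).continuousWithinAt)
    (fun x hx => (hderiv x hx).hasDerivWithinAt) (by simp)
    (by fun_prop)
    (fun x hx => (((hasDerivAt_sqrt (ha.trans_le hx.1).ne').sub_const (√a)).const_mul
      (√(K * y) * normPdf 0)).hasDerivWithinAt)
    (fun x hx => by
      have hx0 : 0 < x := ha.trans_le hx.1
      rw [norm_of_nonneg (div_nonneg (mul_nonneg hK.le (normPdf_nonneg _)) (by positivity)),
        ← div_eq_mul_one_div]
      exact div_le_div_of_nonneg_right (mul_normPdf_sub_sqrt_le hK hy hx0) (by positivity))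
    (right_mem_Icc.2 hab)
  rwa [norm_eq_abs, abs_sub_comm] at hfence

lemma abs_qBS_le {K y : ℝ} (hK : 0 ≤ K) (hy : 0 ≤ y) (t : ℝ) : |qBS K t y| ≤ y + K := by
  rw [qBS, abs_le]
  have := normCdf_nonneg ((2 * log (y / K) + t) / (2 * √t))
  have := normCdf_le_one ((2 * log (y / K) + t) / (2 * √t))
  have := normCdf_nonneg ((2 * log (y / K) - t) / (2 * √t))
  have := normCdf_le_one ((2 * log (y / K) - t) / (2 * √t))
  constructor <;> nlinarith

lemma ofReal_rpow_mul_one_sub_rpow {a b u : ℝ} (hu : u ∈ Ioo 0 1) :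
    ((u ^ (a - 1) * (1 - u) ^ (b - 1) : ℝ) : ℂ)
      = (u : ℂ) ^ ((a : ℂ) - 1) * (1 - (u : ℂ)) ^ ((b : ℂ) - 1) := by
  rw [Complex.ofReal_mul, Complex.ofReal_cpow hu.1.le, Complex.ofReal_cpow (sub_nonneg.2 hu.2.le)]
  push_cast
  rfl

lemma integrableOn_rpow_mul_one_sub_rpow {a b : ℝ} (ha : 0 < a) (hb : 0 < b) :
    IntegrableOn (fun u : ℝ => u ^ (a - 1) * (1 - u) ^ (b - 1)) (Ioo 0 1) := by
  have h := Complex.betaIntegral_convergent (u := a) (v := b) (by simpa) (by simpa)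
  rw [intervalIntegrable_iff_integrableOn_Ioc_of_le zero_le_one] at h
  refine IntegrableOn.congr_fun (h.mono_set Ioo_subset_Ioc_self).re (fun u hu => ?_)
    measurableSet_Ioo
  simp only [← ofReal_rpow_mul_one_sub_rpow hu, RCLike.re_to_complex, Complex.ofReal_re]

lemma integral_rpow_mul_one_sub_rpow {a b : ℝ} (ha : 0 < a) (hb : 0 < b) :
    ∫ u in Ioo 0 1, u ^ (a - 1) * (1 - u) ^ (b - 1) = Gamma a * Gamma b / Gamma (a + b) := by
  apply Complex.ofReal_injective
  rw [← integral_complex_ofReal, setIntegral_congr_fun measurableSet_Ioo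
      fun u hu => ofReal_rpow_mul_one_sub_rpow hu, ← integral_Ioc_eq_integral_Ioo,
    ← intervalIntegral.integral_of_le zero_le_one, ← Complex.betaIntegral,
    Complex.betaIntegral_eq_Gamma_mul_div _ _ (by simpa) (by simpa)]
  push_cast [Complex.Gamma_ofReal, ← Complex.ofReal_add]
  rfl

lemma measurable_qBS (K y : ℝ) : Measurable fun t => qBS K t y := by
  have := continuous_normCdf.measurable
  unfold qBS
  fun_prop

lemma integrableOn_rpow_mul_qBS {K α y : ℝ} (hK : 0 ≤ K) (hy : 0 ≤ y) (hα : α ∈ Ioo 0 1)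
    (r : ℝ) : IntegrableOn (fun u => u ^ (α - 1) * (1 - u) ^ (-α) * qBS K (r * u) y) (Ioo 0 1) := by
  have hbeta := integrableOn_rpow_mul_one_sub_rpow hα.1 (sub_pos.2 hα.2)
  simp only [sub_sub_cancel_left] at hbeta
  refine Integrable.mono' (hbeta.const_mul (y + K))
    (by have := measurable_qBS K y; fun_prop) (ae_restrict_of_forall_mem measurableSet_Ioo ?_)
  intro u hu
  have hw : 0 ≤ u ^ (α - 1) * (1 - u) ^ (-α) :=
    mul_nonneg (rpow_nonneg hu.1.le _) (rpow_nonneg (sub_nonneg.2 hu.2.le) _)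
  rw [norm_mul, norm_of_nonneg hw, mul_comm (y + K)]
  exact mul_le_mul_of_nonneg_left (abs_qBS_le hK hy _) hw

lemma abs_rpow_mul_qBS_sub_le {K α y : ℝ} (hK : 0 < K) (hy : 0 < y) {a b u : ℝ} (ha : 0 < a)
    (hab : a ≤ b) (hu : u ∈ Ioo 0 1) :
    |u ^ (α - 1) * (1 - u) ^ (-α) * qBS K (a * u) y
        - u ^ (α - 1) * (1 - u) ^ (-α) * qBS K (b * u) y|
      ≤ √(K * y) * normPdf 0 * (√b - √a) * (u ^ (α - 1 / 2 - 1) * (1 - u) ^ (1 - α - 1)) := by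
  have hw : 0 ≤ u ^ (α - 1) * (1 - u) ^ (-α) :=
    mul_nonneg (rpow_nonneg hu.1.le _) (rpow_nonneg (sub_nonneg.2 hu.2.le) _)
  have hsqrt : √(b * u) - √(a * u) = (√b - √a) * √u := by
    rw [sqrt_mul (ha.le.trans hab), sqrt_mul ha.le]
    ring
  have hrpow : u ^ (α - 1) * √u ≤ u ^ (α - 1 / 2 - 1) := by
    rw [sqrt_eq_rpow, ← rpow_add hu.1]
    exact rpow_le_rpow_of_exponent_ge hu.1 hu.2.le (by linarith)
  rw [← mul_sub, abs_mul, abs_of_nonneg hw, sub_sub_cancel_left]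
  calc u ^ (α - 1) * (1 - u) ^ (-α) * |qBS K (a * u) y - qBS K (b * u) y|
      ≤ u ^ (α - 1) * (1 - u) ^ (-α) * (√(K * y) * normPdf 0 * (√(b * u) - √(a * u))) :=
        mul_le_mul_of_nonneg_left (abs_qBS_sub_le hK hy (mul_pos ha hu.1)
          (mul_le_mul_of_nonneg_right hab hu.1.le)) hw
    _ = √(K * y) * normPdf 0 * (√b - √a) * (u ^ (α - 1) * √u * (1 - u) ^ (-α)) := by
        rw [hsqrt]; ring
    _ ≤ _ := by
        have : 0 ≤ √b - √a := sub_nonneg.2 (sqrt_le_sqrt hab)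
        have := normPdf_nonneg 0
        have := rpow_nonneg (sub_nonneg.2 hu.2.le) (-α)
        gcongr

lemma abs_qStar_sub_le {K α y : ℝ} (hK : 0 < K) (hy : 0 < y) (hα : α ∈ Ioo (1 / 2) 1) {a b : ℝ}
    (ha : 0 < a) (hab : a ≤ b) :
    |qStar K α a y - qStar K α b y|
      ≤ Gamma (α - 1 / 2) / (√π * Gamma α) * (√(K * y) * normPdf 0 * (√b - √a)) := by
  have hα₀ : α ∈ Ioo 0 1 := ⟨by linarith [hα.1], hα.2⟩
  have hΓα := Gamma_pos_of_pos hα₀.1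
  have hΓ₁ := Gamma_pos_of_pos (sub_pos.2 hα.2)
  have hbound := norm_integral_le_of_norm_le
    ((integrableOn_rpow_mul_one_sub_rpow (sub_pos.2 hα.1) (sub_pos.2 hα.2)).const_mul
      (√(K * y) * normPdf 0 * (√b - √a)))
    (ae_restrict_of_forall_mem measurableSet_Ioo fun u hu =>
      (norm_eq_abs _).trans_le (abs_rpow_mul_qBS_sub_le (α := α) hK hy ha hab hu))
  rw [integral_const_mul, integral_rpow_mul_one_sub_rpow (sub_pos.2 hα.1) (sub_pos.2 hα.2),
    show α - 1 / 2 + (1 - α) = 1 / 2 by ring, Gamma_one_half_eq] at hbound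
  rw [qStar, qStar, if_neg ha.ne', if_neg (ha.trans_le hab).ne', ← mul_sub,
    ← integral_sub (integrableOn_rpow_mul_qBS hK.le hy.le hα₀ a)
      (integrableOn_rpow_mul_qBS hK.le hy.le hα₀ b), abs_mul, abs_of_pos (by positivity)]
  calc (Gamma α * Gamma (1 - α))⁻¹ * |∫ u in Ioo 0 1,
        u ^ (α - 1) * (1 - u) ^ (-α) * qBS K (a * u) y
          - u ^ (α - 1) * (1 - u) ^ (-α) * qBS K (b * u) y|
      ≤ (Gamma α * Gamma (1 - α))⁻¹ *
          (√(K * y) * normPdf 0 * (√b - √a) * (Gamma (α - 1 / 2) * Gamma (1 - α) / √π)) := by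
        gcongr
        exact (norm_eq_abs _).symm.trans_le hbound
    _ = _ := by field_simp

/-- For `0 < s < t` and `y > 0`,
`|q*(t−s,y) − q*(t,y)| ≤ (Γ(α−1/2)/(πΓ(α))) √(Ky) (√t − √(t−s))`. -/
theorem qStar_time_increment_bound
    (K α : ℝ) (hK : 0 < K) (hα : α ∈ Set.Ioo (1 / 2 : ℝ) 1) :
    ∀ s t y : ℝ, 0 < s → s < t → 0 < y →
      |qStar K α (t - s) y - qStar K α t y|
        ≤ Real.Gamma (α - 1 / 2) / (Real.pi * Real.Gamma α) * Real.sqrt (K * y)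
            * (Real.sqrt t - Real.sqrt (t - s)) := by
  intro s t y hs hst hy
  have hΓ := Gamma_pos_of_pos (sub_pos.2 hα.1)
  have hΓα := Gamma_pos_of_pos (hα.1.trans' one_half_pos)
  have hsqrt : 0 ≤ √t - √(t - s) := sub_nonneg.2 (sqrt_le_sqrt (sub_le_self t hs.le))
  calc |qStar K α (t - s) y - qStar K α t y|
      ≤ Gamma (α - 1 / 2) / (√π * Gamma α) * (√(K * y) * normPdf 0 * (√t - √(t - s))) :=
        abs_qStar_sub_le hK hy hα (sub_pos.2 hst) (sub_le_self t hs.le)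
    _ ≤ Gamma (α - 1 / 2) / (√π * Gamma α) * (√(K * y) * (√π)⁻¹ * (√t - √(t - s))) := by
        gcongr
        exact normPdf_zero_le_inv_sqrt_pi
    _ = Gamma (α - 1 / 2) / (π * Gamma α) * √(K * y) * (√t - √(t - s)) := by
        field_simp
        rw [sq_sqrt pi_pos.le]
        ring
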